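/- If (C,D) ∈ 𝓒 with D ≠ [ε], and UV^ω ∩ A·CD^ω ≠ ∅ for classes A, U, V with UV = U, VV = V, then U factors as U = A·Y for some class Y with YV^ω ∩ CD^ω ≠ ∅. -/

import Mathlib

variable {Q : Type*} {A : Type*}

/-- Reachability in a nondeterministic automaton: `q` is reachable from `p` reading `w`. -/
def Reach (δ : Q → A → Set Q) : Q → List A → Q → Prop
  | p, [], q => p = q
  | p, a :: w, q => ∃ r ∈ δ p a, Reach δ r w q

/-- Reachability visiting some final state along the way (possibly the endpoints). -/
def ReachF (δ : Q → A → Set Q) (Fs : Set Q) (p : Q) (w : List A) (q : Q) : Prop :=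
  ∃ u v r, w = u ++ v ∧ r ∈ Fs ∧ Reach δ p u r ∧ Reach δ r v q

/-- The relation ∼ : `w ∼ u` iff for all states `p q`, reachability and
reachability-through-final-states via `w` and via `u` coincide. -/
def Sim (δ : Q → A → Set Q) (Fs : Set Q) (w u : List A) : Prop :=
  ∀ p q : Q, (Reach δ p w q ↔ Reach δ p u q) ∧ (ReachF δ Fs p w q ↔ ReachF δ Fs p u q)

/-- The class of a word in 𝒬 = Σ⁺/∼ ⊎ {[ε]} : for a nonempty word its ∼-class,
and `[ε] = {ε}` for the empty word. -/
def wordClass (δ : Q → A → Set Q) (Fs : Set Q) (w : List A) : Set (List A) :=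
  {u | (w = [] ∧ u = []) ∨ (w ≠ [] ∧ u ≠ [] ∧ Sim δ Fs w u)}

/-- `C` is an element of 𝒬. -/
def IsClass (δ : Q → A → Set Q) (Fs : Set Q) (C : Set (List A)) : Prop :=
  ∃ w : List A, C = wordClass δ Fs w

/-- Elementwise concatenation of languages of finite words. -/
def mulSet (L M : Set (List A)) : Set (List A) := Set.image2 (· ++ ·) L M

/-- Monoid multiplication of classes: the class of the concatenation of representatives. -/
def classMul (δ : Q → A → Set Q) (Fs : Set Q) (C D : Set (List A)) : Set (List A) :=
  {v | ∃ w ∈ C, ∃ u ∈ D, v ∈ wordClass δ Fs (w ++ u)}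

/-- Finite star of a language. -/
def starSet (L : Set (List A)) : Set (List A) :=
  {w | ∃ l : List (List A), (∀ u ∈ l, u ∈ L) ∧ w = l.flatten}

/-- Possibly infinite words over `A` : Σ^{≤ω}, as stable `Option`-valued streams. -/
def Word (A : Type*) : Type _ := {g : ℕ → Option A // ∀ n, g n = none → g (n + 1) = none}

/-- A finite word as an element of Σ^{≤ω}. -/
def ofList (w : List A) : Word A :=
  ⟨fun n => w[n]?, fun n h => by
    rw [List.getElem?_eq_none_iff] at *
    omega⟩

/-- An infinite word as an element of Σ^{≤ω}. -/
def ofStream (s : ℕ → A) : Word A := ⟨fun n => some (s n), fun n h => by simp at h⟩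

/- The (possibly infinite) concatenation `f 0 · f 1 · f 2 ⋯` of a sequence of finite
words, as an element of Σ^{≤ω}. -/
open Classical in
noncomputable def prodWord (f : ℕ → List A) : Word A :=
  ⟨fun n =>
    if h : ∃ k, n < ((List.range k).flatMap f).length then
      ((List.range h.choose).flatMap f)[n]?
    else none, by
    intro n hn
    dsimp only at hn ⊢
    by_cases h : ∃ k, n < ((List.range k).flatMap f).length
    · exfalso
      rw [dif_pos h, List.getElem?_eq_none_iff] at hn
      have := h.choose_spec
      omega
    · have h2 : ¬ ∃ k, n + 1 < ((List.range k).flatMap f).length := by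
        push_neg at h ⊢
        intro k
        have := h k
        omega
      rw [dif_neg h2]⟩

/-- Concatenation of a finite word with a possibly infinite word. -/
def catWord (u : List A) (w : Word A) : Word A :=
  ⟨fun n => if n < u.length then u[n]? else w.1 (n - u.length), by
    intro n hn
    dsimp only at hn ⊢
    by_cases h : n < u.length
    · exfalso
      rw [if_pos h, List.getElem?_eq_none_iff] at hn
      omega
    · rw [if_neg h] at hn
      have h2 : ¬ n + 1 < u.length := by omega
      rw [if_neg h2]
      have h3 : n + 1 - u.length = (n - u.length) + 1 := by omega
      rw [h3]
      exact w.2 _ hn⟩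

/-- `CD^ω` : all words `w₀w₁w₂⋯` with `w₀ ∈ C` and `wᵢ ∈ D` for `i ≥ 1`. -/
def omegaProd (C D : Set (List A)) : Set (Word A) :=
  {w | ∃ f : ℕ → List A, f 0 ∈ C ∧ (∀ i, 1 ≤ i → f i ∈ D) ∧ w = prodWord f}

/-- `L^ω` : all words `w₁w₂w₃⋯` with all `wᵢ ∈ L`. -/
def omegaPow (L : Set (List A)) : Set (Word A) :=
  {w | ∃ f : ℕ → List A, (∀ i, f i ∈ L) ∧ w = prodWord f}

/-- Acceptance of a finite word (as an NFA). -/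
def NFAAccepts (δ : Q → A → Set Q) (q0 : Q) (Fs : Set Q) (w : List A) : Prop :=
  ∃ q ∈ Fs, Reach δ q0 w q

/-- Büchi acceptance of an infinite word: a run from `q0` visiting `Fs` infinitely often. -/
def BuchiAccepts (δ : Q → A → Set Q) (q0 : Q) (Fs : Set Q) (s : ℕ → A) : Prop :=
  ∃ r : ℕ → Q, r 0 = q0 ∧ (∀ n, r (n + 1) ∈ δ (r n) (s n)) ∧ {n | r n ∈ Fs}.Infinite

/-- The language `L(𝔄) ⊆ Σ^{≤ω}` of the extended Büchi automaton: finite words accepted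
as an NFA together with infinite words accepted as a Büchi automaton. -/
def LangOf (δ : Q → A → Set Q) (q0 : Q) (Fs : Set Q) : Set (Word A) :=
  {w | (∃ l : List A, w = ofList l ∧ NFAAccepts δ q0 Fs l) ∨
       (∃ s : ℕ → A, w = ofStream s ∧ BuchiAccepts δ q0 Fs s)}

/-- The set 𝒬 of classes, as a type. -/
def QClass (δ : Q → A → Set Q) (Fs : Set Q) : Type _ := {C : Set (List A) // IsClass δ Fs C}

/-- The set 𝓒 of pairs `(C, D)` of classes with `CD = C` and `DD = D`, as a type. -/
def CPair (δ : Q → A → Set Q) (Fs : Set Q) : Type _ :=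
  {p : Set (List A) × Set (List A) //
    IsClass δ Fs p.1 ∧ IsClass δ Fs p.2 ∧
    classMul δ Fs p.1 p.2 = p.1 ∧ classMul δ Fs p.2 p.2 = p.2}

/-- The language `CD^ω` denoted by an element of 𝓒. -/
def concPair {δ : Q → A → Set Q} {Fs : Set Q} (p : CPair δ Fs) : Set (Word A) :=
  omegaProd p.1.1 p.1.2

/-- A subset 𝒱 ⊆ 𝓒 is closed: whenever `UV^ω ∩ CD^ω ≠ ∅` for `(C,D) ∈ 𝒱` and
`(U,V) ∈ 𝓒`, then `(U,V) ∈ 𝒱`. -/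
def IsClosedC {δ : Q → A → Set Q} {Fs : Set Q} (𝒱 : Set (CPair δ Fs)) : Prop :=
  ∀ p ∈ 𝒱, ∀ q : CPair δ Fs, (concPair q ∩ concPair p).Nonempty → q ∈ 𝒱

/-- Pre-abstraction 𝔣. -/
def frakF (δ : Q → A → Set Q) (Fs : Set Q) (V : Set (Word A)) : Set (CPair δ Fs) :=
  {p | (concPair p ∩ V).Nonempty}

/-- Pre-concretization 𝔤. -/
def frakG {δ : Q → A → Set Q} {Fs : Set Q} (𝒱 : Set (CPair δ Fs)) : Set (Word A) :=
  ⋃ p ∈ 𝒱, concPair p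

/-- Closure 𝔠(𝒱) = ⋃_{n ≥ 1} (𝔣 ∘ 𝔤)ⁿ(𝒱). -/
def frakC {δ : Q → A → Set Q} {Fs : Set Q} (𝒱 : Set (CPair δ Fs)) : Set (CPair δ Fs) :=
  ⋃ n : ℕ, (fun 𝒲 => frakF δ Fs (frakG 𝒲))^[n + 1] 𝒱

/-- Abstraction α_* -/
def alphaStar (δ : Q → A → Set Q) (Fs : Set Q) (U : Set (List A)) : Set (QClass δ Fs) :=
  {C | (C.1 ∩ U).Nonempty}

/-- Concretization γ_* -/
def gammaStar {δ : Q → A → Set Q} {Fs : Set Q} (𝒰 : Set (QClass δ Fs)) : Set (List A) :=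
  ⋃ C ∈ 𝒰, C.1

/-- Abstraction α_{≤ω}. -/
def alphaOmega (δ : Q → A → Set Q) (Fs : Set Q) (V : Set (Word A)) : Set (CPair δ Fs) :=
  frakC (frakF δ Fs V)

/-- Concretization γ_{≤ω}. -/
def gammaOmega {δ : Q → A → Set Q} {Fs : Set Q} (𝒱 : Set (CPair δ Fs)) : Set (Word A) :=
  frakG 𝒱

/-! Write the common word as `u₀u₁u₂⋯` with `u₀ ∈ U`, `uᵢ ∈ V`, and as `a·x` with `a ∈ A`,
`x ∈ CD^ω`. Some prefix `P = u₀⋯uₙ` is at least as long as `a`, so `P = a·y` and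
`x = y·uₙ₊₁uₙ₊₂⋯ ∈ [y]V^ω`. Since `UV = U` we have `P ∈ U`, and since `∼` is a congruence,
`U = [P] = [a][y] = A·[y]`. -/

section Congruence

variable (δ : Q → A → Set Q) (Fs : Set Q)

theorem reach_append_iff (p q : Q) (u v : List A) :
    Reach δ p (u ++ v) q ↔ ∃ r, Reach δ p u r ∧ Reach δ r v q := by
  induction u generalizing p with
  | nil => simp [Reach]
  | cons a u ih => simp only [List.cons_append, Reach, ih]; aesop

theorem reachF_append_iff (p q : Q) (u v : List A) :
    ReachF δ Fs p (u ++ v) q ↔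
      (∃ r, ReachF δ Fs p u r ∧ Reach δ r v q) ∨ ∃ r, Reach δ p u r ∧ ReachF δ Fs r v q := by
  constructor
  · rintro ⟨s, t, r, hst, hr, hs, ht⟩
    rcases List.append_eq_append_iff.mp hst.symm with ⟨m, rfl, rfl⟩ | ⟨m, rfl, rfl⟩
    · obtain ⟨r', hm, hv⟩ := (reach_append_iff δ r q m v).mp ht
      exact Or.inl ⟨r', ⟨s, m, r, rfl, hr, hs, hm⟩, hv⟩
    · obtain ⟨r', hu, hm⟩ := (reach_append_iff δ p r u m).mp hs
      exact Or.inr ⟨r', hu, ⟨m, t, r, rfl, hr, hm, ht⟩⟩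
  · rintro (⟨r, ⟨s, t, r', rfl, hr', hs, ht⟩, hv⟩ | ⟨r, hu, ⟨s, t, r', rfl, hr', hs, ht⟩⟩)
    · exact ⟨s, t ++ v, r', List.append_assoc _ _ _, hr', hs,
        (reach_append_iff δ r' q t v).mpr ⟨r, ht, hv⟩⟩
    · exact ⟨u ++ s, t, r', (List.append_assoc _ _ _).symm, hr',
        (reach_append_iff δ p r' u s).mpr ⟨r, hu, hs⟩, ht⟩

variable {δ Fs}

theorem Sim.refl (w : List A) : Sim δ Fs w w := fun _ _ => ⟨Iff.rfl, Iff.rfl⟩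

theorem Sim.symm {w u : List A} (h : Sim δ Fs w u) : Sim δ Fs u w :=
  fun p q => ⟨(h p q).1.symm, (h p q).2.symm⟩

theorem Sim.trans {w u v : List A} (h₁ : Sim δ Fs w u) (h₂ : Sim δ Fs u v) : Sim δ Fs w v :=
  fun p q => ⟨(h₁ p q).1.trans (h₂ p q).1, (h₁ p q).2.trans (h₂ p q).2⟩

theorem Sim.append {a a' b b' : List A} (ha : Sim δ Fs a a') (hb : Sim δ Fs b b') :
    Sim δ Fs (a ++ b) (a' ++ b') := fun p q =>
  ⟨by simp only [reach_append_iff, fun r => (ha p r).1, fun r => (hb r q).1],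
   by simp only [reachF_append_iff, fun r => (ha p r).1, fun r => (ha p r).2,
      fun r => (hb r q).1, fun r => (hb r q).2]⟩

theorem mem_wordClass_self (w : List A) : w ∈ wordClass δ Fs w := by
  by_cases h : w = []
  · exact Or.inl ⟨h, h⟩
  · exact Or.inr ⟨h, h, Sim.refl w⟩

theorem wordClass_eq_of_mem {w u : List A} (h : u ∈ wordClass δ Fs w) :
    wordClass δ Fs u = wordClass δ Fs w := by
  rcases h with ⟨rfl, rfl⟩ | ⟨hw, hu, hs⟩
  · rfl
  · ext x
    constructor
    · rintro (⟨rfl, -⟩ | ⟨-, hx, hs'⟩)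
      · exact absurd rfl hu
      · exact Or.inr ⟨hw, hx, hs.trans hs'⟩
    · rintro (⟨rfl, -⟩ | ⟨-, hx, hs'⟩)
      · exact absurd rfl hw
      · exact Or.inr ⟨hu, hx, hs.symm.trans hs'⟩

theorem append_mem_wordClass {a a' b b' : List A}
    (ha : a' ∈ wordClass δ Fs a) (hb : b' ∈ wordClass δ Fs b) :
    a' ++ b' ∈ wordClass δ Fs (a ++ b) := by
  rcases ha with ⟨rfl, rfl⟩ | ⟨ha, ha', hsa⟩
  · simpa using hb
  · rcases hb with ⟨rfl, rfl⟩ | ⟨-, hb', hsb⟩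
    · rw [List.append_nil, List.append_nil]
      exact Or.inr ⟨ha, ha', hsa⟩
    · exact Or.inr ⟨by simp [ha], by simp [ha'], hsa.append hsb⟩

theorem classMul_wordClass (a b : List A) :
    classMul δ Fs (wordClass δ Fs a) (wordClass δ Fs b) = wordClass δ Fs (a ++ b) := by
  ext x
  constructor
  · rintro ⟨w, hw, u, hu, hx⟩
    rwa [wordClass_eq_of_mem (append_mem_wordClass hw hu)] at hx
  · exact fun hx => ⟨a, mem_wordClass_self a, b, mem_wordClass_self b, hx⟩

theorem append_mem_of_classMul_eq {U V : Set (List A)} (hUV : classMul δ Fs U V = U)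
    {u v : List A} (hu : u ∈ U) (hv : v ∈ V) : u ++ v ∈ U :=
  hUV ▸ ⟨u, hu, v, hv, mem_wordClass_self _⟩

theorem flatMap_range_succ_mem_of_classMul_eq {U V : Set (List A)}
    (hUV : classMul δ Fs U V = U) {f : ℕ → List A} (hf₀ : f 0 ∈ U)
    (hf : ∀ i, 1 ≤ i → f i ∈ V) (n : ℕ) : (List.range (n + 1)).flatMap f ∈ U := by
  induction n with
  | zero => simpa using hf₀
  | succ n ih =>
    rw [List.range_succ, List.flatMap_append, List.flatMap_singleton]
    exact append_mem_of_classMul_eq hUV ih (hf _ n.succ_pos)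

end Congruence

section Words

theorem flatMap_range_add {α : Type*} (f : ℕ → List α) (k m : ℕ) :
    (List.range (k + m)).flatMap f =
      (List.range k).flatMap f ++ (List.range m).flatMap fun i => f (k + i) := by
  rw [List.range_add, List.flatMap_append, List.flatMap_map]

theorem flatMap_range_prefix_of_le {α : Type*} (f : ℕ → List α) {k k' : ℕ} (h : k ≤ k') :
    (List.range k).flatMap f <+: (List.range k').flatMap f := by
  obtain ⟨m, rfl⟩ := Nat.exists_eq_add_of_le h
  rw [flatMap_range_add]
  exact List.prefix_append _ _

theorem getElem?_flatMap_range_of_le {α : Type*} (f : ℕ → List α) {k k' n : ℕ} (h : k ≤ k')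
    (hn : n < ((List.range k).flatMap f).length) :
    ((List.range k').flatMap f)[n]? = ((List.range k).flatMap f)[n]? := by
  obtain ⟨t, ht⟩ := flatMap_range_prefix_of_le f h
  rw [← ht, List.getElem?_append_left hn]

theorem prodWord_apply_of_lt_length (f : ℕ → List A) {k n : ℕ}
    (h : n < ((List.range k).flatMap f).length) :
    (prodWord f).1 n = ((List.range k).flatMap f)[n]? := by
  have hex : ∃ k, n < ((List.range k).flatMap f).length := ⟨k, h⟩
  rw [show (prodWord f).1 n = _ from dif_pos hex]
  rcases le_total hex.choose k with hle | hle
  · exact (getElem?_flatMap_range_of_le f hle hex.choose_spec).symm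
  · exact getElem?_flatMap_range_of_le f hle h

theorem exists_lt_length_of_prodWord_apply_ne_none {f : ℕ → List A} {n : ℕ}
    (h : (prodWord f).1 n ≠ none) : ∃ k, n < ((List.range k).flatMap f).length := by
  by_contra hex
  exact h (dif_neg hex)

theorem catWord_apply (u : List A) (w : Word A) (n : ℕ) :
    (catWord u w).1 n = if n < u.length then u[n]? else w.1 (n - u.length) := rfl

theorem catWord_append (u v : List A) (w : Word A) :
    catWord (u ++ v) w = catWord u (catWord v w) := by
  apply Subtype.ext; funext n
  simp only [catWord_apply, List.length_append, List.getElem?_append]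
  split_ifs <;> first | rfl | (exfalso; omega) | rw [Nat.sub_add_eq]

theorem catWord_injective (u : List A) : Function.Injective (catWord u) := fun w w' h => by
  apply Subtype.ext; funext n
  simpa [catWord_apply] using congrArg (fun z : Word A => z.1 (n + u.length)) h

theorem prodWord_eq_catWord (f : ℕ → List A) (k : ℕ) :
    prodWord f = catWord ((List.range k).flatMap f) (prodWord fun i => f (k + i)) := by
  set P := (List.range k).flatMap f with hP
  apply Subtype.ext; funext n
  rw [catWord_apply]
  split_ifs with hn
  · exact prodWord_apply_of_lt_length f hn
  by_cases hex : ∃ m, n - P.length < ((List.range m).flatMap fun i => f (k + i)).length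
  · obtain ⟨m, hm⟩ := hex
    have hlt : n < ((List.range (k + m)).flatMap f).length := by
      rw [flatMap_range_add, ← hP, List.length_append]; omega
    rw [prodWord_apply_of_lt_length f hlt, prodWord_apply_of_lt_length _ hm, flatMap_range_add,
      ← hP, List.getElem?_append_right (by omega)]
  · rw [show (prodWord fun i => f (k + i)).1 (n - P.length) = none from dif_neg hex]
    refine dif_neg ?_
    rintro ⟨m, hm⟩
    have hle := (flatMap_range_prefix_of_le f (Nat.le_add_left m k)).length_le
    rw [flatMap_range_add, ← hP, List.length_append] at hle
    exact hex ⟨m, by omega⟩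

theorem exists_eq_append_of_catWord_eq_catWord {a P : List A} {x z : Word A}
    (h : catWord a x = catWord P z) (hle : a.length ≤ P.length) :
    ∃ y, P = a ++ y ∧ x = catWord y z := by
  have hpre : a <+: P := by
    rw [List.prefix_iff_eq_take]
    apply List.ext_getElem?
    intro i
    rw [List.getElem?_take]
    split_ifs with hi
    · simpa [catWord_apply, hi, lt_of_lt_of_le hi hle] using congrArg (fun w => w.1 i) h
    · exact List.getElem?_eq_none (by omega)
  obtain ⟨y, rfl⟩ := hpre
  exact ⟨y, rfl, catWord_injective a (by rw [h, catWord_append])⟩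

theorem exists_length_le_of_prodWord_eq_catWord {f : ℕ → List A} {a : List A} {x : Word A}
    (h : prodWord f = catWord a x) :
    ∃ n, a.length ≤ ((List.range (n + 1)).flatMap f).length := by
  by_cases ha : a = []
  · exact ⟨0, by simp [ha]⟩
  have hlast : (prodWord f).1 (a.length - 1) ≠ none := by
    rw [h, catWord_apply, if_pos (by simpa [List.length_pos_iff] using ha)]
    simp [List.length_pos_iff, ha]
  obtain ⟨k, hk⟩ := exists_lt_length_of_prodWord_apply_ne_none hlast
  exact ⟨k, by have := (flatMap_range_prefix_of_le f (Nat.le_add_right k 1)).length_le; omega⟩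

theorem catWord_prodWord_mem_omegaProd {Y V : Set (List A)} {y : List A} {g : ℕ → List A}
    (hy : y ∈ Y) (hg : ∀ i, g i ∈ V) : catWord y (prodWord g) ∈ omegaProd Y V := by
  refine ⟨fun i => if i = 0 then y else g (i - 1), by simpa using hy,
    fun i hi => by simpa [Nat.ne_zero_of_lt hi] using hg (i - 1), ?_⟩
  rw [prodWord_eq_catWord (fun i => if i = 0 then y else g (i - 1)) 1]
  simp

end Words

theorem key_decomposition_general {Q A : Type*}
    (δ : Q → A → Set Q) (Fs : Set Q)
    (Ac U V C D : Set (List A))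
    (hAc : IsClass δ Fs Ac) (hU : IsClass δ Fs U)
    (hUV : classMul δ Fs U V = U)
    (hmeet : (omegaProd U V ∩
      {w : Word A | ∃ a ∈ Ac, ∃ x ∈ omegaProd C D, w = catWord a x}).Nonempty) :
    ∃ Y : Set (List A), IsClass δ Fs Y ∧ classMul δ Fs Ac Y = U ∧
      (omegaProd Y V ∩ omegaProd C D).Nonempty := by
  obtain ⟨_, ⟨f, hf₀, hfV, rfl⟩, a, ha, x, hx, hfax⟩ := hmeet
  obtain ⟨n, hn⟩ := exists_length_le_of_prodWord_eq_catWord hfax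
  rw [prodWord_eq_catWord f (n + 1)] at hfax
  obtain ⟨y, hP, rfl⟩ := exists_eq_append_of_catWord_eq_catWord hfax.symm hn
  have hPU := flatMap_range_succ_mem_of_classMul_eq hUV hf₀ hfV n
  obtain ⟨a₀, rfl⟩ := hAc
  obtain ⟨u₀, rfl⟩ := hU
  refine ⟨wordClass δ Fs y, ⟨y, rfl⟩, ?_, _, ?_, hx⟩
  · rw [← wordClass_eq_of_mem ha, classMul_wordClass, ← hP, wordClass_eq_of_mem hPU]
  · exact catWord_prodWord_mem_omegaProd (mem_wordClass_self y) fun i => hfV _ (by omega)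

/-- if `(C,D) ∈ 𝓒` with `D ≠ [ε]` and `UV^ω ∩ A·CD^ω ≠ ∅` with `UV = U`,
`VV = V`, then `U = A·Y` for some class `Y` with `YV^ω ∩ CD^ω ≠ ∅`. -/
theorem key_decomposition {Q A : Type*} [Finite Q] [Finite A]
    (δ : Q → A → Set Q) (Fs : Set Q)
    (Ac U V C D : Set (List A))
    (hAc : IsClass δ Fs Ac) (hU : IsClass δ Fs U) (hV : IsClass δ Fs V)
    (hC : IsClass δ Fs C) (hD : IsClass δ Fs D)
    (hCD : classMul δ Fs C D = C) (hDD : classMul δ Fs D D = D)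
    (hDne : D ≠ {([] : List A)})
    (hUV : classMul δ Fs U V = U) (hVV : classMul δ Fs V V = V)
    (hmeet : (omegaProd U V ∩
      {w : Word A | ∃ a ∈ Ac, ∃ x ∈ omegaProd C D, w = catWord a x}).Nonempty) :
    ∃ Y : Set (List A), IsClass δ Fs Y ∧ classMul δ Fs Ac Y = U ∧
      (omegaProd Y V ∩ omegaProd C D).Nonempty :=
  key_decomposition_general δ Fs Ac U V C D hAc hU hUV hmeet
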